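/- arXiv:1303.0301 — 2 statements merged into one kernel-verified Lean document; each statement's English description precedes it below -/
import Mathlib

section
/- Let Ω ⊆ ℝ² be open and let u : Ω → ℝ be twice differentiable with u < 0 on Ω, satisfying ‖∇u(x)‖²·Δu(x) − ∇²u(x)(∇u(x), ∇u(x)) = 1 for all x ∈ Ω. Then the function φ := −log(−u) is twice differentiable on Ω and satisfies ‖∇φ(x)‖²·Δφ(x) − ∇²φ(x)(∇φ(x), ∇φ(x)) = e^{3φ(x)} for all x ∈ Ω; equivalently, ‖∇φ‖² · Σ_{i,j} (δ_{ij} − φ_i φ_j / ‖∇φ‖²) φ_{ij} = e^{3φ} wherever ∇φ ≠ 0. -/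
open Real Set

noncomputable section

/-- The Hessian of `u` at `x`, as a bilinear map (the derivative of the derivative). -/
noncomputable def hessianBilin (u : EuclideanSpace ℝ (Fin 2) → ℝ) (x : EuclideanSpace ℝ (Fin 2)) :
    EuclideanSpace ℝ (Fin 2) →L[ℝ] EuclideanSpace ℝ (Fin 2) →L[ℝ] ℝ :=
  fderiv ℝ (fun y => fderiv ℝ u y) x

/-- The Laplacian of `u` at `x`: the trace of the Hessian, computed in the standard
orthonormal basis of `ℝ²`. -/
noncomputable def laplacian2 (u : EuclideanSpace ℝ (Fin 2) → ℝ) (x : EuclideanSpace ℝ (Fin 2)) : ℝ :=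
  ∑ i : Fin 2, hessianBilin u x (EuclideanSpace.single i 1) (EuclideanSpace.single i 1)

/-- `u` is twice differentiable on `S`. -/
def TwiceDiffOn (u : EuclideanSpace ℝ (Fin 2) → ℝ) (S : Set (EuclideanSpace ℝ (Fin 2))) : Prop :=
  ∀ x ∈ S, DifferentiableAt ℝ u x ∧ DifferentiableAt ℝ (fun y => fderiv ℝ u y) x


/-!
Write `φ = f ∘ u` with `f t = -log (-t)`. Then `∇φ = f'(u) ∇u` and
`∇²φ = f'(u) ∇²u + f''(u) ∇u ⊗ ∇u`. The rank-one term adds `f'(u)² f''(u) ‖∇u‖⁴` to both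
`‖∇φ‖² Δφ` and `∇²φ(∇φ, ∇φ)`, so it cancels, and the operator `‖∇φ‖² Δφ - ∇²φ(∇φ, ∇φ)`
is `f'(u)³` times that of `u`. Here `f'(u) = -1/u = e^φ`.
-/

open Filter Topology InnerProductSpace

section SecondDerivative

variable {𝕜 E : Type*} [NontriviallyNormedField 𝕜] [NormedAddCommGroup E] [NormedSpace 𝕜 E]

theorem hasFDerivAt_fderiv_comp {f f' : 𝕜 → 𝕜} {f'' : 𝕜} {u : E → 𝕜} {x : E}
    (hf : ∀ᶠ y in 𝓝 x, HasDerivAt f (f' (u y)) (u y))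
    (hu : ∀ᶠ y in 𝓝 x, DifferentiableAt 𝕜 u y)
    (hf' : HasDerivAt f' f'' (u x)) (hu' : DifferentiableAt 𝕜 (fderiv 𝕜 u) x) :
    HasFDerivAt (fderiv 𝕜 (f ∘ u))
      (f' (u x) • fderiv 𝕜 (fderiv 𝕜 u) x + (f'' • fderiv 𝕜 u x).smulRight (fderiv 𝕜 u x)) x := by
  have hfderiv : fderiv 𝕜 (f ∘ u) =ᶠ[𝓝 x] fun y => f' (u y) • fderiv 𝕜 u y := by
    filter_upwards [hf, hu] with y hfy huy
    exact (hfy.comp_hasFDerivAt y huy.hasFDerivAt).fderiv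
  exact ((hf'.comp_hasFDerivAt x hu.self_of_nhds.hasFDerivAt).smul hu'.hasFDerivAt)
    |>.congr_of_eventuallyEq hfderiv

end SecondDerivative

section LevelSetOperator

variable {ι E : Type*} [Fintype ι] [NormedAddCommGroup E] [InnerProductSpace ℝ E] [CompleteSpace E]

theorem HasDerivAt.comp_hasGradientAt {f : ℝ → ℝ} {f' : ℝ} {u : E → ℝ} {g x : E}
    (hf : HasDerivAt f f' (u x)) (hu : HasGradientAt u g x) :
    HasGradientAt (f ∘ u) (f' • g) x := by
  rw [hasGradientAt_iff_hasFDerivAt, map_smul]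
  exact hf.comp_hasFDerivAt x (hasGradientAt_iff_hasFDerivAt.mp hu)

def levelSetACSF (b : OrthonormalBasis ι ℝ E) (H : E →L[ℝ] E →L[ℝ] ℝ) (g : E) : ℝ :=
  ‖g‖ ^ 2 * ∑ i, H (b i) (b i) - H g g

theorem levelSetACSF_smul_add_rankOne (b : OrthonormalBasis ι ℝ E) (H : E →L[ℝ] E →L[ℝ] ℝ)
    (g : E) (a c : ℝ) :
    levelSetACSF b (a • H + (c • toDual ℝ E g).smulRight (toDual ℝ E g)) (a • g) =
      a ^ 3 * levelSetACSF b H g := by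
  have hparseval : ∑ i, ⟪g, b i⟫_ℝ * ⟪g, b i⟫_ℝ = ‖g‖ ^ 2 := by
    simpa only [real_inner_comm (b _) g, real_inner_self_eq_norm_sq] using b.sum_inner_mul_inner g g
  simp only [levelSetACSF, add_apply, smul_apply,
    ContinuousLinearMap.smulRight_apply, map_smul, toDual_apply_apply, smul_eq_mul,
    Finset.sum_add_distrib, ← Finset.mul_sum, mul_assoc, hparseval, norm_smul, mul_pow,
    Real.norm_eq_abs, sq_abs, real_inner_self_eq_norm_sq]
  ring

end LevelSetOperator

theorem levelSetACSF_basisFun (u : EuclideanSpace ℝ (Fin 2) → ℝ) (x : EuclideanSpace ℝ (Fin 2)) :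
    levelSetACSF (EuclideanSpace.basisFun (Fin 2) ℝ) (hessianBilin u x) (gradient u x) =
      ‖gradient u x‖ ^ 2 * laplacian2 u x - hessianBilin u x (gradient u x) (gradient u x) := by
  simp only [levelSetACSF, laplacian2, EuclideanSpace.basisFun_apply]

theorem hasDerivAt_neg_log_neg {t : ℝ} (ht : t < 0) :
    HasDerivAt (fun s => -log (-s)) (-t⁻¹) t :=
  ((hasDerivAt_neg t).log (neg_ne_zero.mpr ht.ne)).fun_neg.congr_deriv (by field_simp)

theorem hasDerivAt_neg_inv {t : ℝ} (ht : t ≠ 0) : HasDerivAt (fun s => -s⁻¹) ((t ^ 2)⁻¹) t :=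
  (hasDerivAt_inv ht).fun_neg.congr_deriv (neg_neg _)

theorem exp_three_mul_neg_log_neg {t : ℝ} (ht : t < 0) : exp (3 * -log (-t)) = (-t⁻¹) ^ 3 := by
  rw [← log_inv, ← Nat.cast_ofNat, ← log_pow, exp_log (pow_pos (inv_pos.mpr (neg_pos.mpr ht)) 3),
    inv_neg]

theorem equation_for_phi
    (Ω : Set (EuclideanSpace ℝ (Fin 2))) (hΩ : IsOpen Ω)
    (u : EuclideanSpace ℝ (Fin 2) → ℝ)
    (hu2 : TwiceDiffOn u Ω)
    (huneg : ∀ x ∈ Ω, u x < 0)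
    (hACSF : ∀ x ∈ Ω,
      ‖gradient u x‖ ^ 2 * laplacian2 u x
        - hessianBilin u x (gradient u x) (gradient u x) = 1) :
    TwiceDiffOn (fun x => -Real.log (-u x)) Ω ∧
    ∀ x ∈ Ω,
      ‖gradient (fun x => -Real.log (-u x)) x‖ ^ 2
          * laplacian2 (fun x => -Real.log (-u x)) x
        - hessianBilin (fun x => -Real.log (-u x)) x
            (gradient (fun x => -Real.log (-u x)) x)
            (gradient (fun x => -Real.log (-u x)) x)
      = Real.exp (3 * (-Real.log (-u x))) := by
  set f : ℝ → ℝ := fun s => -log (-s)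
  have hhess : ∀ x ∈ Ω, HasFDerivAt (fderiv ℝ (f ∘ u))
      ((-(u x)⁻¹) • hessianBilin u x
        + ((u x ^ 2)⁻¹ • fderiv ℝ u x).smulRight (fderiv ℝ u x)) x := fun x hx =>
    hasFDerivAt_fderiv_comp
      (eventually_of_mem (hΩ.mem_nhds hx) fun y hy => hasDerivAt_neg_log_neg (huneg y hy))
      (eventually_of_mem (hΩ.mem_nhds hx) fun y hy => (hu2 y hy).1)
      (hasDerivAt_neg_inv (huneg x hx).ne) (hu2 x hx).2
  have hgrad : ∀ x ∈ Ω, HasGradientAt (f ∘ u) ((-(u x)⁻¹) • gradient u x) x := fun x hx =>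
    (hasDerivAt_neg_log_neg (huneg x hx)).comp_hasGradientAt (hu2 x hx).1.hasGradientAt
  refine ⟨fun x hx => ⟨(hgrad x hx).differentiableAt, (hhess x hx).differentiableAt⟩,
    fun x hx => ?_⟩
  have hH : hessianBilin (f ∘ u) x = _ := (hhess x hx).fderiv
  rw [← levelSetACSF_basisFun]
  change levelSetACSF _ (hessianBilin (f ∘ u) x) (gradient (f ∘ u) x) = _
  rw [hH, (hgrad x hx).gradient, ← toDual_gradient, levelSetACSF_smul_add_rankOne,
    levelSetACSF_basisFun, hACSF x hx, exp_three_mul_neg_log_neg (huneg x hx), mul_one]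
end
end

section
/- Let S ⊆ ℝ² and let u : ℝ² → ℝ be twice differentiable on S and satisfy the level-set equation of the affine curve shortening flow on S. Let A be a 2×2 real matrix with det A = 1. Then the function v(x) := u(Ax) is twice differentiable on A⁻¹(S) and satisfies the level-set equation of the affine curve shortening flow on A⁻¹(S). -/
open Real Set

noncomputable section

/-- `u` satisfies the level-set equation of the affine curve shortening flow on `S`:
`‖∇u‖² Δu − ∇²u(∇u, ∇u) = 1` on `S`. -/
def SatisfiesACSF (u : EuclideanSpace ℝ (Fin 2) → ℝ) (S : Set (EuclideanSpace ℝ (Fin 2))) : Prop :=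
  ∀ x ∈ S, ‖gradient u x‖ ^ 2 * laplacian2 u x
      - hessianBilin u x (gradient u x) (gradient u x) = 1

/-! The left-hand side of the equation is `∇²u(J∇u, J∇u)`, where `J` is the rotation by a right
angle. For `v = u ∘ A` the chain rule gives `∇v(x) = Aᵀ∇u(Ax)` and
`∇²v(x)(w, w') = ∇²u(Ax)(Aw, Aw')`, and every `2 × 2` matrix satisfies `A J Aᵀ = (det A) J`.
Hence the left-hand side for `v` at `x` is `(det A)²` times the one for `u` at `Ax`. -/

namespace ContinuousLinearEquiv

section fderiv

variable {𝕜 E F G : Type*} [NontriviallyNormedField 𝕜]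
  [NormedAddCommGroup E] [NormedSpace 𝕜 E] [NormedAddCommGroup F] [NormedSpace 𝕜 F]
  [NormedAddCommGroup G] [NormedSpace 𝕜 G] (B : E ≃L[𝕜] F) (u : F → G)

theorem comp_right_fderiv' :
    fderiv 𝕜 (u ∘ B) = B.symm.arrowCongr (.refl 𝕜 G) ∘ fderiv 𝕜 u ∘ B :=
  funext fun _ => B.comp_right_fderiv

theorem differentiableAt_fderiv_comp_right_iff {x : E} :
    DifferentiableAt 𝕜 (fderiv 𝕜 (u ∘ B)) x ↔ DifferentiableAt 𝕜 (fderiv 𝕜 u) (B x) := by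
  rw [comp_right_fderiv', comp_differentiableAt_iff, comp_right_differentiableAt_iff]

theorem fderiv_fderiv_comp_right_apply (x w₁ w₂ : E) :
    fderiv 𝕜 (fderiv 𝕜 (u ∘ B)) x w₁ w₂ = fderiv 𝕜 (fderiv 𝕜 u) (B x) (B w₁) (B w₂) := by
  rw [comp_right_fderiv', comp_fderiv, comp_right_fderiv]
  rfl

end fderiv

theorem comp_right_gradient {E F : Type*}
    [NormedAddCommGroup E] [InnerProductSpace ℝ E] [CompleteSpace E]
    [NormedAddCommGroup F] [InnerProductSpace ℝ F] [CompleteSpace F]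
    (B : E ≃L[ℝ] F) (u : F → ℝ) (x : E) :
    gradient (u ∘ B) x = ContinuousLinearMap.adjoint (B : E →L[ℝ] F) (gradient u (B x)) := by
  refine ext_inner_right ℝ fun w => ?_
  rw [ContinuousLinearMap.adjoint_inner_left]
  simp only [gradient, InnerProductSpace.toDual_symm_apply, B.comp_right_fderiv]
  rfl

end ContinuousLinearEquiv

namespace Matrix

variable {𝕜 n : Type*} [RCLike 𝕜] [Fintype n] [DecidableEq n]

def toEuclideanCLE (A : Matrix n n 𝕜) (hA : IsUnit A.det) :
    EuclideanSpace 𝕜 n ≃L[𝕜] EuclideanSpace 𝕜 n :=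
  ContinuousLinearEquiv.unitsEquiv 𝕜 _
    (Units.map (toEuclideanCLM (n := n) (𝕜 := 𝕜) : Matrix n n 𝕜 →* _) (A.nonsingInvUnit hA))

theorem coe_toEuclideanCLE (A : Matrix n n 𝕜) (hA : IsUnit A.det) :
    (A.toEuclideanCLE hA : EuclideanSpace 𝕜 n →L[𝕜] EuclideanSpace 𝕜 n) =
      toEuclideanCLM (n := n) (𝕜 := 𝕜) A :=
  rfl

end Matrix

section Plane

local notation "ℝ²" => EuclideanSpace ℝ (Fin 2)

def rot90 (p : ℝ²) : ℝ² := !₂[-p 1, p 0]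

theorem apply_rot90_rot90 (K : ℝ² →L[ℝ] ℝ² →L[ℝ] ℝ) (p : ℝ²) :
    K (rot90 p) (rot90 p) =
      ‖p‖ ^ 2 * ∑ i, K (EuclideanSpace.single i 1) (EuclideanSpace.single i 1) - K p p := by
  have expand : ∀ w z : ℝ², K w z =
      ∑ i, ∑ j, w i * z j * K (EuclideanSpace.single i 1) (EuclideanSpace.single j 1) := by
    intro w z
    conv_lhs => rw [← (EuclideanSpace.basisFun (Fin 2) ℝ).sum_repr w,
      ← (EuclideanSpace.basisFun (Fin 2) ℝ).sum_repr z]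
    simp only [EuclideanSpace.basisFun_repr, EuclideanSpace.basisFun_apply, Fin.sum_univ_two,
      map_add, map_smul, add_apply, smul_apply, smul_eq_mul]
    ring
  rw [expand, expand]
  simp only [rot90, Fin.sum_univ_two, Matrix.cons_val_zero, Matrix.cons_val_one,
    EuclideanSpace.norm_sq_eq, Real.norm_eq_abs, sq_abs]
  ring

theorem Matrix.toEuclideanCLM_rot90_adjoint (A : Matrix (Fin 2) (Fin 2) ℝ) (p : ℝ²) :
    Matrix.toEuclideanCLM (n := Fin 2) (𝕜 := ℝ) A
        (rot90 (ContinuousLinearMap.adjoint (Matrix.toEuclideanCLM (n := Fin 2) (𝕜 := ℝ) A) p)) =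
      A.det • rot90 p := by
  rw [← ContinuousLinearMap.star_eq_adjoint, ← map_star]
  ext i
  fin_cases i <;>
    simp only [rot90, ofLp_toEuclideanCLM, Matrix.star_apply, star_trivial, toEuclideanCLM_toLp,
      Matrix.mulVec_fin_two, Matrix.cons_val_zero, Matrix.cons_val_one, Matrix.cons_val_fin_one,
      Matrix.det_fin_two, PiLp.smul_apply, smul_eq_mul, Fin.zero_eta, Fin.mk_one] <;>
    ring

theorem satisfiesACSF_iff (u : ℝ² → ℝ) (S : Set ℝ²) :
    SatisfiesACSF u S ↔
      ∀ x ∈ S, hessianBilin u x (rot90 (gradient u x)) (rot90 (gradient u x)) = 1 := by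
  simp only [SatisfiesACSF, laplacian2, apply_rot90_rot90]

end Plane

/-- Unimodular affine invariance of the level-set equation of the affine curve
shortening flow: `v(x) = u(Ax)` is again a solution, on `A⁻¹(S)`, for `det A = 1`. -/
theorem ACSF_affine_invariance
    (S : Set (EuclideanSpace ℝ (Fin 2)))
    (u : EuclideanSpace ℝ (Fin 2) → ℝ)
    (hu2 : TwiceDiffOn u S) (hu : SatisfiesACSF u S)
    (A : Matrix (Fin 2) (Fin 2) ℝ) (hA : A.det = 1) :
    TwiceDiffOn (fun x => u (Matrix.toEuclideanLin A x))
      ((fun x => Matrix.toEuclideanLin A x) ⁻¹' S) ∧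
    SatisfiesACSF (fun x => u (Matrix.toEuclideanLin A x))
      ((fun x => Matrix.toEuclideanLin A x) ⁻¹' S) := by
  set B := A.toEuclideanCLE (hA ▸ isUnit_one)
  change TwiceDiffOn (u ∘ B) (B ⁻¹' S) ∧ SatisfiesACSF (u ∘ B) (B ⁻¹' S)
  refine ⟨fun x hx => ⟨B.comp_right_differentiableAt_iff.2 (hu2 _ hx).1,
    (B.differentiableAt_fderiv_comp_right_iff u).2 (hu2 _ hx).2⟩, ?_⟩
  rw [satisfiesACSF_iff] at hu ⊢
  intro x hx
  rw [hessianBilin, B.fderiv_fderiv_comp_right_apply, B.comp_right_gradient,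
    ← ContinuousLinearEquiv.coe_coe, Matrix.coe_toEuclideanCLE,
    Matrix.toEuclideanCLM_rot90_adjoint, hA, one_smul]
  exact hu _ hx

end
end
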